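/- arXiv:2211.03106 — 6 statements merged into one kernel-verified Lean document; each statement's English description precedes it below -/
import Mathlib

section
/- If positive reals v, v̂ solve the system (MR), then v̂ = √v · ((2+(1+θ)v)/(θ+1+2v))^(k/2). -/
theorem sq_eq_mul_pow_of_eq {M : Type*} [CommMonoid M] {a b x y : M} {k : ℕ} (hk : 2 ≤ k)
    (hx : x = a ^ 2 * b ^ (k - 2)) (hy : y = a * b ^ (k - 1)) : y ^ 2 = x * b ^ k := by
  have hexp : (k - 1) * 2 = (k - 2) + k := by omega
  rw [hx, hy, mul_pow, ← pow_mul, hexp, pow_add, mul_assoc]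

theorem Real.eq_sqrt_mul_rpow_of_sq_eq {x v b : ℝ} {k : ℕ} (hx : 0 ≤ x) (hb : 0 ≤ b)
    (h : x ^ 2 = v * b ^ k) : x = √v * b ^ ((k : ℝ) / 2) := by
  have hsqrt : √(b ^ k) = b ^ ((k : ℝ) / 2) := by
    rw [Real.sqrt_eq_rpow, ← Real.rpow_natCast, ← Real.rpow_mul hb, mul_one_div]
  rw [← hsqrt, ← Real.sqrt_mul' v (pow_nonneg hb k), ← h, Real.sqrt_sq hx]

theorem MR_implies_vhat_eq_general (k : ℕ) (hk : 2 ≤ k) (θ ζ η : ℝ)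
    (hθ : 1 < θ)
    (v vh : ℝ) (hv : 0 < v) (hvh : 0 < vh)
    (h1 : v = ((ζ + 1 + 2 * vh) / (2 + (1 + η) * vh)) ^ 2 *
            ((2 + (1 + θ) * v) / (θ + 1 + 2 * v)) ^ (k - 2))
    (h2 : vh = ((ζ + 1 + 2 * vh) / (2 + (1 + η) * vh)) *
            ((2 + (1 + θ) * v) / (θ + 1 + 2 * v)) ^ (k - 1)) :
    vh = Real.sqrt v * ((2 + (1 + θ) * v) / (θ + 1 + 2 * v)) ^ ((k : ℝ) / 2) := by
  have hB : 0 ≤ (2 + (1 + θ) * v) / (θ + 1 + 2 * v) := div_nonneg (by nlinarith) (by linarith)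
  exact Real.eq_sqrt_mul_rpow_of_sq_eq hvh.le hB (sq_eq_mul_pow_of_eq hk h1 h2)

/-- If positive reals `v, v̂` solve system (MR), then
`v̂ = √v · ((2+(1+θ)v)/(θ+1+2v))^(k/2)`. -/
theorem MR_implies_vhat_eq (k : ℕ) (hk : 2 ≤ k) (θ ζ η : ℝ)
    (hθ : 1 < θ) (hζ0 : 0 < ζ) (hζ1 : ζ < 1) (hη : 1 < η)
    (v vh : ℝ) (hv : 0 < v) (hvh : 0 < vh)
    (h1 : v = ((ζ + 1 + 2 * vh) / (2 + (1 + η) * vh)) ^ 2 *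
            ((2 + (1 + θ) * v) / (θ + 1 + 2 * v)) ^ (k - 2))
    (h2 : vh = ((ζ + 1 + 2 * vh) / (2 + (1 + η) * vh)) *
            ((2 + (1 + θ) * v) / (θ + 1 + 2 * v)) ^ (k - 1)) :
    vh = Real.sqrt v * ((2 + (1 + θ) * v) / (θ + 1 + 2 * v)) ^ ((k : ℝ) / 2) :=
  MR_implies_vhat_eq_general k hk θ ζ η hθ v vh hv hvh h1 h2
end

section
/- Conversely, if a positive real v satisfies v = f(v), where f(v) = [((ζ+1)(θ+1+2v)^(k/2) + 2√v·(2+(1+θ)v)^(k/2)) / (2(θ+1+2v)^(k/2) + (1+η)√v·(2+(1+θ)v)^(k/2))]² · ((2+(1+θ)v)/(θ+1+2v))^(k−2), and one defines v̂ = √v · ((2+(1+θ)v)/(θ+1+2v))^(k/2), then the pair (v, v̂) solves the system (MR). -/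
/-!
Write `x = (2+(1+θ)v)/(θ+1+2v)`, `a = (θ+1+2v)^(k/2)` and `b = (2+(1+θ)v)^(k/2)`, so that
`v̂ = √v · b/a`. Multiplying numerator and denominator of `(ζ+1+2v̂)/(2+(1+η)v̂)` by `a` turns it
into the ratio `Q` occurring in `f`, so the first equation of (MR) is `v = f(v)` itself. Since
`Q > 0`, taking square roots gives `√v = Q · x^((k-2)/2)`, hence `v̂ = Q · x^(k-1)`.
-/

lemma ratio_mul_div_eq (c d s a b : ℝ) (ha : a ≠ 0) :
    (c + 2 * (s * (b / a))) / (2 + d * (s * (b / a))) =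
      (c * a + 2 * s * b) / (2 * a + d * s * b) := by
  rw [← mul_div_mul_right _ _ ha]
  congr 1 <;> field_simp

lemma Real.sqrt_sq_mul_pow {q x : ℝ} (hq : 0 ≤ q) (hx : 0 ≤ x) (n : ℕ) :
    √(q ^ 2 * x ^ n) = q * x ^ ((n : ℝ) / 2) := by
  rw [Real.sqrt_mul (by positivity), Real.sqrt_sq hq, Real.sqrt_eq_rpow, ← Real.rpow_natCast,
    ← Real.rpow_mul hx]
  ring_nf

lemma Real.rpow_natSub_two_half_mul_rpow_half {x : ℝ} (hx : 0 < x) {k : ℕ} (hk : 2 ≤ k) :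
    x ^ (((k - 2 : ℕ) : ℝ) / 2) * x ^ ((k : ℝ) / 2) = x ^ (k - 1) := by
  rw [← Real.rpow_add hx, ← Real.rpow_natCast]
  congr 1
  push_cast [Nat.cast_sub hk, Nat.cast_sub (by omega : 1 ≤ k)]
  ring

theorem fixed_point_f_implies_MR_general (k : ℕ) (hk : 2 ≤ k) (θ ζ η : ℝ)
    (hθ : 1 < θ) (hζ0 : 0 < ζ) (hη : 1 < η)
    (v : ℝ) (hv : 0 < v)
    (hf : v = (((ζ + 1) * (θ + 1 + 2 * v) ^ ((k : ℝ) / 2) +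
            2 * Real.sqrt v * (2 + (1 + θ) * v) ^ ((k : ℝ) / 2)) /
          (2 * (θ + 1 + 2 * v) ^ ((k : ℝ) / 2) +
            (1 + η) * Real.sqrt v * (2 + (1 + θ) * v) ^ ((k : ℝ) / 2))) ^ 2 *
        ((2 + (1 + θ) * v) / (θ + 1 + 2 * v)) ^ (k - 2))
    (vh : ℝ)
    (hvh : vh = Real.sqrt v * ((2 + (1 + θ) * v) / (θ + 1 + 2 * v)) ^ ((k : ℝ) / 2)) :
    v = ((ζ + 1 + 2 * vh) / (2 + (1 + η) * vh)) ^ 2 *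
          ((2 + (1 + θ) * v) / (θ + 1 + 2 * v)) ^ (k - 2) ∧
    vh = ((ζ + 1 + 2 * vh) / (2 + (1 + η) * vh)) *
          ((2 + (1 + θ) * v) / (θ + 1 + 2 * v)) ^ (k - 1) := by
  have hA : 0 < θ + 1 + 2 * v := by linarith
  have hB : 0 < 2 + (1 + θ) * v := by nlinarith
  set x := (2 + (1 + θ) * v) / (θ + 1 + 2 * v) with hx_def
  have hx : 0 < x := div_pos hB hA
  set Q := ((ζ + 1) * (θ + 1 + 2 * v) ^ ((k : ℝ) / 2) +
      2 * √v * (2 + (1 + θ) * v) ^ ((k : ℝ) / 2)) /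
    (2 * (θ + 1 + 2 * v) ^ ((k : ℝ) / 2) + (1 + η) * √v * (2 + (1 + θ) * v) ^ ((k : ℝ) / 2))
  have hratio : (ζ + 1 + 2 * vh) / (2 + (1 + η) * vh) = Q := by
    rw [hvh, hx_def, Real.div_rpow hB.le hA.le, ratio_mul_div_eq _ _ _ _ _ (by positivity)]
  rw [hratio]
  refine ⟨hf, ?_⟩
  have hsqrt : √v = Q * x ^ (((k - 2 : ℕ) : ℝ) / 2) :=
    (congrArg Real.sqrt hf).trans (Real.sqrt_sq_mul_pow (by positivity) hx.le _)
  rw [hvh, hsqrt, mul_assoc, Real.rpow_natSub_two_half_mul_rpow_half hx hk]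

/-- Conversely: if a positive real `v` satisfies `v = f(v)` and one defines
`v̂ = √v · ((2+(1+θ)v)/(θ+1+2v))^(k/2)`, then `(v, v̂)` solves system (MR). -/
theorem fixed_point_f_implies_MR (k : ℕ) (hk : 2 ≤ k) (θ ζ η : ℝ)
    (hθ : 1 < θ) (hζ0 : 0 < ζ) (hζ1 : ζ < 1) (hη : 1 < η)
    (v : ℝ) (hv : 0 < v)
    (hf : v = (((ζ + 1) * (θ + 1 + 2 * v) ^ ((k : ℝ) / 2) +
            2 * Real.sqrt v * (2 + (1 + θ) * v) ^ ((k : ℝ) / 2)) /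
          (2 * (θ + 1 + 2 * v) ^ ((k : ℝ) / 2) +
            (1 + η) * Real.sqrt v * (2 + (1 + θ) * v) ^ ((k : ℝ) / 2))) ^ 2 *
        ((2 + (1 + θ) * v) / (θ + 1 + 2 * v)) ^ (k - 2))
    (vh : ℝ)
    (hvh : vh = Real.sqrt v * ((2 + (1 + θ) * v) / (θ + 1 + 2 * v)) ^ ((k : ℝ) / 2)) :
    v = ((ζ + 1 + 2 * vh) / (2 + (1 + η) * vh)) ^ 2 *
          ((2 + (1 + θ) * v) / (θ + 1 + 2 * v)) ^ (k - 2) ∧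
    vh = ((ζ + 1 + 2 * vh) / (2 + (1 + η) * vh)) *
          ((2 + (1 + θ) * v) / (θ + 1 + 2 * v)) ^ (k - 1) :=
  fixed_point_f_implies_MR_general k hk θ ζ η hθ hζ0 hη v hv hf vh hvh
end

section
/- Every fixed point (u, v, w) ∈ (0,∞)³ of G satisfies u = 1 and v = w; that is, Fix(G) ⊆ L where L = {(u, v, w) ∈ (0,∞)³ : u = 1, v = w}. -/
/-!
Write a fixed point as `u = (a / D)^k`, `v = (b / D)^k`, `w = (c / D)^k` with common denominator
`D = 1 + u + η v + w`. Since `x ↦ x^k` is strictly monotone on `[0, ∞)`, comparing numerators gives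
`1 < u ↔ v < w` (as `a - D = (η - 1)(w - v)`), `u < 1 ↔ w < v`, and `v < w ↔ u < 1`
(as `c - b = (1 - ζ)(1 - u)`). The first and third are incompatible unless `u = 1`, and then `v = w`.
-/

/-- The operator `G` of the BCC-DNA model (q = 2), acting on triples `(u, v, w)`. -/
noncomputable def Gop (k : ℕ) (ζ η : ℝ) (p : ℝ × ℝ × ℝ) : ℝ × ℝ × ℝ :=
  let u := p.1; let v := p.2.1; let w := p.2.2
  ( ((1 + u + v + η * w) / (1 + u + η * v + w)) ^ k,
    ((ζ + u + v + w) / (1 + u + η * v + w)) ^ k,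
    ((1 + ζ * u + v + w) / (1 + u + η * v + w)) ^ k )

lemma pow_div_lt_pow_div_iff {a b D : ℝ} {k : ℕ} (ha : 0 ≤ a) (hb : 0 ≤ b) (hD : 0 < D)
    (hk : k ≠ 0) : (a / D) ^ k < (b / D) ^ k ↔ a < b := by
  rw [pow_lt_pow_iff_left₀ (div_nonneg ha hD.le) (div_nonneg hb hD.le) hk,
    div_lt_div_iff_of_pos_right hD]

namespace Gop

variable {k : ℕ} {ζ η u v w : ℝ}

lemma eq_self_iff : Gop k ζ η (u, v, w) = (u, v, w) ↔
    ((1 + u + v + η * w) / (1 + u + η * v + w)) ^ k = u ∧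
    ((ζ + u + v + w) / (1 + u + η * v + w)) ^ k = v ∧
    ((1 + ζ * u + v + w) / (1 + u + η * v + w)) ^ k = w := by
  simp only [Gop, Prod.mk.injEq]

section FirstComponent

variable (hk : k ≠ 0) (hη : 1 < η) (hu : 0 < u) (hv : 0 < v) (hw : 0 < w)
  (hfst : ((1 + u + v + η * w) / (1 + u + η * v + w)) ^ k = u)
include hk hη hu hv hw hfst

lemma one_lt_iff_lt_of_fst_eq : 1 < u ↔ v < w := by
  have hD : 0 < 1 + u + η * v + w := by nlinarith
  have key := pow_div_lt_pow_div_iff (b := 1 + u + v + η * w) hD.le (by nlinarith) hD hk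
  rw [div_self hD.ne', one_pow, hfst] at key
  rw [key]
  constructor <;> intro h <;> nlinarith

lemma lt_one_iff_lt_of_fst_eq : u < 1 ↔ w < v := by
  have hD : 0 < 1 + u + η * v + w := by nlinarith
  have key := pow_div_lt_pow_div_iff (a := 1 + u + v + η * w) (by nlinarith) hD.le hD hk
  rw [div_self hD.ne', one_pow, hfst] at key
  rw [key]
  constructor <;> intro h <;> nlinarith

end FirstComponent

lemma lt_iff_lt_one_of_snd_thd_eq (hk : k ≠ 0) (hζ0 : 0 < ζ) (hζ1 : ζ < 1) (hη : 1 < η)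
    (hu : 0 < u) (hv : 0 < v) (hw : 0 < w)
    (hsnd : ((ζ + u + v + w) / (1 + u + η * v + w)) ^ k = v)
    (hthd : ((1 + ζ * u + v + w) / (1 + u + η * v + w)) ^ k = w) : v < w ↔ u < 1 := by
  have hD : 0 < 1 + u + η * v + w := by nlinarith
  have key := pow_div_lt_pow_div_iff (a := ζ + u + v + w) (b := 1 + ζ * u + v + w)
    (by positivity) (by positivity) hD hk
  rw [hsnd, hthd] at key
  rw [key]
  constructor <;> intro h <;> nlinarith

end Gop

/-- Every fixed point of `G` in `(0,∞)³` satisfies `u = 1` and `v = w`,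
i.e. `Fix(G) ⊆ L`. -/
theorem fix_G_subset_L (k : ℕ) (hk : 1 ≤ k) (ζ η : ℝ)
    (hζ0 : 0 < ζ) (hζ1 : ζ < 1) (hη : 1 < η)
    (u v w : ℝ) (hu : 0 < u) (hv : 0 < v) (hw : 0 < w)
    (hfix : Gop k ζ η (u, v, w) = (u, v, w)) :
    u = 1 ∧ v = w := by
  obtain ⟨hfst, hsnd, hthd⟩ := Gop.eq_self_iff.mp hfix
  have hk0 : k ≠ 0 := by omega
  have h_gt := Gop.one_lt_iff_lt_of_fst_eq hk0 hη hu hv hw hfst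
  have h_lt := Gop.lt_one_iff_lt_of_fst_eq hk0 hη hu hv hw hfst
  have h_cross := Gop.lt_iff_lt_one_of_snd_thd_eq hk0 hζ0 hζ1 hη hu hv hw hsnd hthd
  have hu1 : u = 1 := le_antisymm
    (not_lt.mp fun h => lt_asymm (h_cross.mp (h_gt.mp h)) h)
    (not_lt.mp fun h => lt_asymm (h_lt.mp h) (h_cross.mpr h))
  refine ⟨hu1, le_antisymm ?_ ?_⟩
  · exact not_lt.mp fun h => (h_lt.mpr h).ne hu1
  · exact not_lt.mp fun h => (h_cross.mp h).ne hu1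
end

section
/- For any integer k ≥ 1 and real parameters ζ ∈ (0,1), η > 1, the equation v = ((ζ+1+2v)/(2+(1+η)v))^k has exactly one positive real solution v. -/
/-!
Put `a = ζ + 1`, `b = 1 + η` and `G s = 2 s + b s ^ (k + 1) - 2 s ^ k` (`levelPoly b k`).
Writing a solution as `v = s ^ k` with `s = (a + 2 v) / (2 + b v)`, the positive solutions `v`
correspond exactly to the positive roots of `G s = a`. Since `b ≥ 2`, `G` is strictly increasing
on `[0, ∞)`: Bernoulli's inequality `s ^ k + k s ^ (k - 1) (1 - s) ≤ 1` makes `G'` positive.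
As `G 0 ≤ 0 < a ≤ G (a + 1)`, the equation `G s = a` has exactly one root.
-/

open Set

section

variable {a b s : ℝ} {k : ℕ}

def levelPoly (b : ℝ) (k : ℕ) (s : ℝ) : ℝ := 2 * s + b * s ^ (k + 1) - 2 * s ^ k

lemma continuous_levelPoly (b : ℝ) (k : ℕ) : Continuous (levelPoly b k) := by
  unfold levelPoly
  fun_prop

lemma hasDerivAt_levelPoly (b : ℝ) (k : ℕ) (s : ℝ) :
    HasDerivAt (levelPoly b k) (2 + b * ((k + 1) * s ^ k) - 2 * (k * s ^ (k - 1))) s := by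
  have hpow_succ : HasDerivAt (fun t : ℝ => t ^ (k + 1)) ((k + 1) * s ^ k) s := by
    simpa using hasDerivAt_pow (k + 1) s
  have h := (((hasDerivAt_id' s).const_mul 2).fun_add (hpow_succ.const_mul b)).fun_sub
    ((hasDerivAt_pow k s).const_mul 2)
  rw [mul_one] at h
  exact h

lemma levelPoly_deriv_pos (hb : 2 ≤ b) (hs : 0 < s) :
    0 < 2 + b * ((k + 1) * s ^ k) - 2 * (k * s ^ (k - 1)) := by
  have bernoulli : s ^ k + k * s ^ (k - 1) * (1 - s) ≤ 1 := by
    simpa using pow_add_mul_le_add_pow hs.le (b := 1 - s) (by linarith) k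
  have hpred : (k : ℝ) * s ^ (k - 1) * s = k * s ^ k := by
    cases k <;> simp [pow_succ, mul_assoc]
  have hb_mul : 2 * ((k + 1) * s ^ k) ≤ b * ((k + 1) * s ^ k) :=
    mul_le_mul_of_nonneg_right hb (by positivity)
  have hsk : 0 < s ^ k := pow_pos hs k
  nlinarith

lemma strictMonoOn_levelPoly (hb : 2 ≤ b) (k : ℕ) : StrictMonoOn (levelPoly b k) (Ici 0) := by
  refine strictMonoOn_of_deriv_pos (convex_Ici 0) (continuous_levelPoly b k).continuousOn ?_
  intro s hs
  rw [interior_Ici] at hs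
  rw [(hasDerivAt_levelPoly b k s).deriv]
  exact levelPoly_deriv_pos hb hs

lemma exists_pos_levelPoly_eq (ha : 0 < a) (hb : 2 ≤ b) (k : ℕ) :
    ∃ s, 0 < s ∧ levelPoly b k s = a := by
  have hG₀ : levelPoly b k 0 ≤ 0 := by simp [levelPoly]
  have hG₁ : a ≤ levelPoly b k (a + 1) := by
    have hgrowth : 0 ≤ (a + 1) ^ k * (b * (a + 1) - 2) := by
      apply mul_nonneg (by positivity); nlinarith
    simp only [levelPoly, pow_succ]
    nlinarith
  obtain ⟨s, hs, hGs⟩ := intermediate_value_Icc (by linarith : (0 : ℝ) ≤ a + 1)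
    (continuous_levelPoly b k).continuousOn ⟨hG₀.trans ha.le, hG₁⟩
  refine ⟨s, hs.1.lt_of_ne ?_, hGs⟩
  rintro rfl
  linarith

lemma div_eq_self_iff_levelPoly_eq (hb : 0 ≤ b) (hs : 0 ≤ s) :
    (a + 2 * s ^ k) / (2 + b * s ^ k) = s ↔ levelPoly b k s = a := by
  have hden : 0 < 2 + b * s ^ k := by positivity
  rw [div_eq_iff hden.ne', levelPoly, pow_succ]
  constructor <;> intro h <;> linarith

end

theorem unique_positive_solution_general (k : ℕ) (ζ η : ℝ)
    (hζ0 : 0 < ζ) (hη : 1 < η) :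
    ∃! v : ℝ, 0 < v ∧ v = ((ζ + 1 + 2 * v) / (2 + (1 + η) * v)) ^ k := by
  have hb : 2 ≤ 1 + η := by linarith
  obtain ⟨s₀, hs₀, hG₀⟩ := exists_pos_levelPoly_eq (by linarith : 0 < ζ + 1) hb k
  refine ⟨s₀ ^ k, ⟨pow_pos hs₀ k, ?_⟩, ?_⟩
  · rw [(div_eq_self_iff_levelPoly_eq (by linarith) hs₀.le).2 hG₀]
  rintro v ⟨hv, hsol⟩
  obtain ⟨s, hs_def⟩ : ∃ s, (ζ + 1 + 2 * v) / (2 + (1 + η) * v) = s := ⟨_, rfl⟩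
  rw [hs_def] at hsol
  have hs : 0 < s := by rw [← hs_def]; positivity
  have hGs : levelPoly (1 + η) k s = ζ + 1 := by
    rwa [← div_eq_self_iff_levelPoly_eq (by linarith) hs.le, ← hsol]
  rw [hsol, (strictMonoOn_levelPoly hb k).injOn hs.le hs₀.le (hGs.trans hG₀.symm)]

/-- For any integer `k ≥ 1`, `ζ ∈ (0,1)`, `η > 1`, the equation
`v = ((ζ+1+2v)/(2+(1+η)v))^k` has exactly one positive real solution. -/
theorem unique_positive_solution (k : ℕ) (hk : 1 ≤ k) (ζ η : ℝ)
    (hζ0 : 0 < ζ) (hζ1 : ζ < 1) (hη : 1 < η) :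
    ∃! v : ℝ, 0 < v ∧ v = ((ζ + 1 + 2 * v) / (2 + (1 + η) * v)) ^ k :=
  unique_positive_solution_general k ζ η hζ0 hη
end

section
/- Let k ≥ 1 be an integer and let a, b be reals with 0 < a < 1 < b. Then the polynomial g(x) = b·x^(k+1) − x^k + x − a has exactly one root in the open interval (0,1). -/
/-!
On `[0, ∞)` the map `x ↦ b x^(k+1) - x^k + x` is strictly increasing when `1 ≤ b`: its derivative
`b (k+1) x^k - k x^(k-1) + 1` is at least `2 x^k`, by Bernoulli's inequality
`k x^(k-1) ≤ (k-1) x^k + 1`. It takes the values `-0^k ≤ 0 < a` at `0` and `b > a` at `1`, so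
it hits `a` exactly once in `(0, 1)`.
-/

open Set

lemma natCast_mul_pow_pred_le {x : ℝ} (hx : 0 ≤ x) (k : ℕ) :
    k * x ^ (k - 1) ≤ (k - 1) * x ^ k + 1 := by
  cases k with
  | zero => simp
  | succ m =>
    have bernoulli := pow_add_mul_le_add_pow hx (by linarith : 0 ≤ 2 * x + (1 - x)) (m + 1)
    simp only [add_sub_cancel, one_pow, add_tsub_cancel_right] at bernoulli ⊢
    rw [pow_succ] at bernoulli ⊢
    push_cast at bernoulli ⊢
    linarith

lemma strictMonoOn_mul_pow_succ_sub_pow_add {b : ℝ} (k : ℕ) (hb : 1 ≤ b) :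
    StrictMonoOn (fun x : ℝ => b * x ^ (k + 1) - x ^ k + x) (Ici 0) := by
  refine strictMonoOn_of_deriv_pos (convex_Ici 0) (by fun_prop) fun x hx => ?_
  rw [interior_Ici] at hx
  have hderiv : HasDerivAt (fun x : ℝ => b * x ^ (k + 1) - x ^ k + x)
      (b * ((k + 1) * x ^ k) - k * x ^ (k - 1) + 1) x := by
    have h := (((hasDerivAt_pow (k + 1) x).const_mul b).sub (hasDerivAt_pow k x)).add
      (hasDerivAt_id x)
    rwa [Nat.add_sub_cancel, Nat.cast_succ] at h
  rw [hderiv.deriv]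
  have hxk : 0 < x ^ k := pow_pos hx k
  have hbk : 0 ≤ (b - 1) * (k + 1) * x ^ k :=
    mul_nonneg (mul_nonneg (sub_nonneg.2 hb) (by positivity)) hxk.le
  linarith [natCast_mul_pow_pred_le hx.le k]

theorem unique_root_in_Ioo_general (k : ℕ) (a b : ℝ)
    (ha0 : 0 < a) (ha1 : a < 1) (hb : 1 < b) :
    ∃! x : ℝ, x ∈ Set.Ioo (0 : ℝ) 1 ∧
      b * x ^ (k + 1) - x ^ k + x - a = 0 := by
  set f : ℝ → ℝ := fun x => b * x ^ (k + 1) - x ^ k + x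
  have hmono : StrictMonoOn f (Ici 0) := strictMonoOn_mul_pow_succ_sub_pow_add k hb.le
  have ha : a ∈ Ioo (f 0) (f 1) := by
    simp only [f, zero_pow (Nat.succ_ne_zero k), mul_zero, one_pow, mul_one]
    constructor <;> linarith [(pow_nonneg le_rfl k : (0 : ℝ) ≤ 0 ^ k)]
  obtain ⟨x, hx, hfx⟩ := intermediate_value_Ioo zero_le_one (by fun_prop : ContinuousOn f _) ha
  refine ⟨x, ⟨hx, sub_eq_zero.2 hfx⟩, fun y ⟨hy, hfy⟩ => ?_⟩
  exact hmono.injOn hy.1.le hx.1.le (hfx.symm ▸ sub_eq_zero.1 hfy)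

/-- The polynomial `g(x) = b·x^(k+1) − x^k + x − a` with `0 < a < 1 < b` has
exactly one root in the open interval `(0,1)`. -/
theorem unique_root_in_Ioo (k : ℕ) (hk : 1 ≤ k) (a b : ℝ)
    (ha0 : 0 < a) (ha1 : a < 1) (hb : 1 < b) :
    ∃! x : ℝ, x ∈ Set.Ioo (0 : ℝ) 1 ∧
      b * x ^ (k + 1) - x ^ k + x - a = 0 :=
  unique_root_in_Ioo_general k a b ha0 ha1 hb
end

section
/- Let k ≥ 1 be an integer and b > 1 a real number. Then b(k+1)x^k − k·x^(k−1) + 1 > 0 for every x ∈ (0,1); consequently the function g(x) = b·x^(k+1) − x^k + x − a (for any real a) is strictly increasing on [0,1]. -/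
/-! The derivative `b(k+1)x^k − k·x^(k−1) + 1` exceeds its value at `b = 1`, and that value is at
least `2x^k` by the AM–GM inequality `k·x^(k−1) ≤ (k−1)·x^k + 1` (`x^(k−1)` is the weighted
geometric mean of `x^k` and `1`). So `g' > 0` on `(0, 1)`. -/

section AMGM

variable {R : Type*} [CommRing R] [LinearOrder R] [IsStrictOrderedRing R]

theorem one_sub_mul_one_sub_pow_nonneg {x : R} (hx : 0 ≤ x) (m : ℕ) :
    0 ≤ (1 - x) * (1 - x ^ m) := by
  rcases le_total x 1 with hx1 | hx1
  · exact mul_nonneg (sub_nonneg.2 hx1) (sub_nonneg.2 (pow_le_one₀ hx hx1))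
  · exact mul_nonneg_of_nonpos_of_nonpos (sub_nonpos.2 hx1) (sub_nonpos.2 (one_le_pow₀ hx1))

theorem add_one_mul_pow_le {x : R} (hx : 0 ≤ x) (n : ℕ) :
    (n + 1) * x ^ n ≤ n * x ^ (n + 1) + 1 := by
  induction n with
  | zero => simp
  | succ n ih =>
    have ih_mul_x := mul_le_mul_of_nonneg_left ih hx
    have := one_sub_mul_one_sub_pow_nonneg hx (n + 1)
    push_cast
    linear_combination ih_mul_x + this

end AMGM

theorem hasDerivAt_bcc_poly (k : ℕ) (a b x : ℝ) :
    HasDerivAt (fun x : ℝ => b * x ^ (k + 1) - x ^ k + x - a)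
      (b * (k + 1) * x ^ k - k * x ^ (k - 1) + 1) x := by
  refine ((((hasDerivAt_pow (k + 1) x).const_mul b).sub (hasDerivAt_pow k x)).add
    (hasDerivAt_id x)).sub_const a |>.congr_deriv ?_
  rw [Nat.add_sub_cancel]
  push_cast
  ring

theorem bcc_deriv_pos {k : ℕ} (hk : 1 ≤ k) {b : ℝ} (hb : 1 ≤ b) {x : ℝ} (hx : 0 < x) :
    0 < b * (k + 1) * x ^ k - k * x ^ (k - 1) + 1 := by
  obtain ⟨n, rfl⟩ := Nat.exists_eq_add_of_le' hk
  have amgm := add_one_mul_pow_le hx.le n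
  have hxn : 0 < x ^ (n + 1) := pow_pos hx _
  have hb_term : 0 ≤ (b - 1) * ((n : ℝ) + 1 + 1) * x ^ (n + 1) := by positivity
  simp only [Nat.add_sub_cancel, Nat.cast_succ]
  linarith

/-- For `k ≥ 1` and `b > 1`: `b(k+1)x^k − k·x^(k−1) + 1 > 0` on `(0,1)`;
consequently `g(x) = b·x^(k+1) − x^k + x − a` is strictly increasing on `[0,1]`. -/
theorem derivative_pos_and_strictMono (k : ℕ) (hk : 1 ≤ k) (b : ℝ) (hb : 1 < b) :
    (∀ x ∈ Set.Ioo (0 : ℝ) 1,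
      0 < b * (k + 1) * x ^ k - k * x ^ (k - 1) + 1) ∧
    ∀ a : ℝ, StrictMonoOn (fun x : ℝ => b * x ^ (k + 1) - x ^ k + x - a)
      (Set.Icc (0 : ℝ) 1) := by
  refine ⟨fun x hx => bcc_deriv_pos hk hb.le hx.1, fun a => ?_⟩
  apply strictMonoOn_of_hasDerivWithinAt_pos (convex_Icc 0 1) (by fun_prop)
  · exact fun x _ => (hasDerivAt_bcc_poly k a b x).hasDerivWithinAt
  · rw [interior_Icc]
    exact fun x hx => bcc_deriv_pos hk hb.le hx.1
end
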